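/- In the quotient ring C[r]/(q(r)), the image of η_R(a_4^5 − 2a_3^4a_4^2) equals the image of a_4^5 − 2a_3^4a_4^2; i.e. the element a_4^5 − 2a_3^4a_4^2 is invariant modulo the relation q(r) = 0. -/
import Mathlib


/-!
`Cbar = 𝔽_5[a_3,a_4]` (the variables `0,1 : Fin 2` are `a_3, a_4`),
`q(t) = t^5 + a_3t^2 + a_4t`, and `etaR : Cbar → Cbar[r]` is the 𝔽_5-algebra map sending
`a_i` (for `i = 3,4`) to the coefficient of `x^{5-i}` in `q(x+r) - q(r)`, computed in
`Cbar[r][x]`.  This is the reduction modulo `(5, a_1, a_2, a_5)` of the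
Gorbounov–Hopkins–Mahowald Hopf algebroid at the prime `5`.
-/

/-- The ring `C = 𝔽_5[a_3,a_4]`. -/
abbrev Cbar : Type := MvPolynomial (Fin 2) (ZMod 5)

/-- The generator `a_3`. -/
noncomputable def a3 : Cbar := MvPolynomial.X 0
/-- The generator `a_4`. -/
noncomputable def a4 : Cbar := MvPolynomial.X 1

/-- The polynomial `q(t) = t^5 + a_3t^2 + a_4t` as an element of `C[t]`. -/
noncomputable def q : Polynomial Cbar :=
  Polynomial.X ^ 5 + Polynomial.C a3 * Polynomial.X ^ 2 + Polynomial.C a4 * Polynomial.X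

/-- `q(x+r) - q(r)`, an element of `C[r][x]` (the inner variable is `r`, the outer is `x`). -/
noncomputable def qShift : Polynomial (Polynomial Cbar) :=
  Polynomial.eval₂ (Polynomial.C.comp Polynomial.C)
      (Polynomial.X + Polynomial.C Polynomial.X) q -
    Polynomial.eval₂ (Polynomial.C.comp Polynomial.C) (Polynomial.C Polynomial.X) q

/-- The right unit `η_R : C → C[r]`, sending `a_i` (for `i = 3,4`) to the coefficient of
`x^{5-i}` in `q(x+r) - q(r)`. -/
noncomputable def etaR : Cbar →ₐ[ZMod 5] Polynomial Cbar :=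
  MvPolynomial.aeval (fun k : Fin 2 => qShift.coeff (2 - k.1))

set_option maxSynthPendingDepth 3

lemma C_two : (Polynomial.C (2 : Polynomial Cbar)) = (2 : Polynomial (Polynomial Cbar)) :=
  map_ofNat _ 2

lemma C_two' : (Polynomial.C (2 : Cbar)) = (2 : Polynomial Cbar) :=
  map_ofNat _ 2

lemma five_eq_zero : (5 : Polynomial (Polynomial Cbar)) = 0 := by
  have h : ((5 : ℕ) : Polynomial (Polynomial Cbar)) = 0 := by
    exact_mod_cast CharP.cast_eq_zero (Polynomial (Polynomial Cbar)) 5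
  exact_mod_cast h

lemma five_eq_zero' : (5 : Polynomial Cbar) = 0 := by
  have h : ((5 : ℕ) : Polynomial Cbar) = 0 := by
    exact_mod_cast CharP.cast_eq_zero (Polynomial Cbar) 5
  exact_mod_cast h

lemma qShift_eq : qShift = Polynomial.X ^ 5
    + Polynomial.C (Polynomial.C a3) * Polynomial.X ^ 2
    + Polynomial.C (2 * Polynomial.C a3 * Polynomial.X + Polynomial.C a4) * Polynomial.X := by
  simp only [qShift, q, Polynomial.eval₂_add, Polynomial.eval₂_mul, Polynomial.eval₂_pow,
    Polynomial.eval₂_X, Polynomial.eval₂_C, RingHom.coe_comp, Function.comp_apply, map_add,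
    map_mul, C_two, C_two']
  linear_combination five_eq_zero *
    (Polynomial.X ^ 4 * Polynomial.C Polynomial.X
      + 2 * Polynomial.X ^ 3 * Polynomial.C Polynomial.X ^ 2
      + 2 * Polynomial.X ^ 2 * Polynomial.C Polynomial.X ^ 3
      + Polynomial.X * Polynomial.C Polynomial.X ^ 4)

lemma qShift_coeff_two : qShift.coeff 2 = Polynomial.C a3 := by
  rw [qShift_eq]
  simp [Polynomial.coeff_X_pow, Polynomial.coeff_C_mul]

lemma qShift_coeff_one :
    qShift.coeff 1 = 2 * Polynomial.C a3 * Polynomial.X + Polynomial.C a4 := by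
  rw [qShift_eq]
  simp [Polynomial.coeff_X_pow, Polynomial.coeff_C_mul]

/-- In `C[r]/(q(r))`, the image of `η_R(a_4^5 − 2a_3^4a_4^2)` equals the image of
`a_4^5 − 2a_3^4a_4^2` (here `q = q(r) ∈ C[r]`): the reduction of the discriminant is
invariant modulo the relation `q(r) = 0`. -/
theorem disc_invariant_mod_q :
    Ideal.Quotient.mk (Ideal.span {q}) (etaR (a4 ^ 5 - 2 * a3 ^ 4 * a4 ^ 2)) =
      Ideal.Quotient.mk (Ideal.span {q}) (Polynomial.C (a4 ^ 5 - 2 * a3 ^ 4 * a4 ^ 2)) := by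
  rw [Ideal.Quotient.eq]
  rw [Ideal.mem_span_singleton]
  refine ⟨2 * Polynomial.C a3 ^ 5, ?_⟩
  have h3 : etaR a3 = Polynomial.C a3 := by
    simp [etaR, a3, qShift_coeff_two]
  have h4 : etaR a4 = 2 * Polynomial.C a3 * Polynomial.X + Polynomial.C a4 := by
    simp [etaR, a4, qShift_coeff_one]
  rw [map_sub, map_mul, map_mul, map_pow, map_pow, map_pow, map_ofNat, h3, h4, q]
  simp only [map_sub, map_mul, map_pow, map_ofNat, Polynomial.C_mul, Polynomial.C_pow, C_two,
    C_two']
  set X := (Polynomial.X : Polynomial Cbar)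
  set w := Polynomial.C a3
  set v := Polynomial.C a4
  linear_combination five_eq_zero' *
    (6 * w ^ 5 * X ^ 5 + 16 * w ^ 4 * X ^ 4 * v + 16 * w ^ 3 * X ^ 3 * v ^ 2
      + 8 * w ^ 2 * X ^ 2 * v ^ 3 + 2 * w * X * v ^ 4 - 2 * w ^ 6 * X ^ 2 - 2 * w ^ 5 * v * X)
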